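/- Let f : {0,1}^n → {0,1} be either constant or balanced, and define Δ(u) = |{w' ∈ {0,1}^{t-1} : f(uw'0) = f(uw'1) = 0}| − |{w' ∈ {0,1}^{t-1} : f(uw'0) = f(uw'1) = 1}| ∈ ℤ for u ∈ {0,1}^{n-t}. Then f is constant if and only if either Δ(u) = 2^{t-1} for all u ∈ {0,1}^{n-t}, or Δ(u) = −2^{t-1} for all u ∈ {0,1}^{n-t}. -/
import Mathlib


/-- `Δ(u)` with `t = s + 1`: the number of `w' ∈ {0,1}^s` with
`f(uw'0) = f(uw'1) = 0` minus the number with `f(uw'0) = f(uw'1) = 1`. -/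
def DeltaFn (m s : ℕ) (f : (Fin (m + s + 1) → Bool) → Bool) (u : Fin m → Bool) : ℤ :=
  ((Finset.univ.filter fun w' : Fin s → Bool =>
      f (Fin.snoc (Fin.append u w') false) = false ∧
      f (Fin.snoc (Fin.append u w') true) = false).card : ℤ) -
    ((Finset.univ.filter fun w' : Fin s → Bool =>
      f (Fin.snoc (Fin.append u w') false) = true ∧
      f (Fin.snoc (Fin.append u w') true) = true).card : ℤ)

lemma decomp_snoc (m s : ℕ) (x : Fin (m + s + 1) → Bool) :
    ∃ (u : Fin m → Bool) (w' : Fin s → Bool) (b : Bool),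
      x = Fin.snoc (Fin.append u w') b := by
  refine ⟨fun i => x (Fin.castSucc (Fin.castAdd s i)),
    fun j => x (Fin.castSucc (Fin.natAdd m j)), x (Fin.last _), ?_⟩
  funext i
  induction i using Fin.lastCases with
  | last => simp
  | cast i =>
    rw [Fin.snoc_castSucc]
    induction i using Fin.addCases with
    | left i => rw [Fin.append_left]
    | right i => rw [Fin.append_right]

lemma card_pow (s : ℕ) : (Finset.univ : Finset (Fin s → Bool)).card = 2 ^ s := by
  simp

/-- `f` (constant or balanced) is constant iff `Δ(u) = 2^(t-1)` for all `u`
or `Δ(u) = −2^(t-1)` for all `u`. -/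
theorem stmt10 (m s : ℕ) (f : (Fin (m + s + 1) → Bool) → Bool)
    (hcb : (∀ x, f x = false) ∨ (∀ x, f x = true) ∨
      (Finset.univ.filter fun x => f x = true).card = 2 ^ (m + s)) :
    ((∀ x, f x = false) ∨ (∀ x, f x = true)) ↔
      ((∀ u : Fin m → Bool, DeltaFn m s f u = 2 ^ s) ∨
       (∀ u : Fin m → Bool, DeltaFn m s f u = -2 ^ s)) := by
  constructor
  · rintro (h | h)
    · left; intro u
      unfold DeltaFn
      simp [h]
    · right; intro u
      unfold DeltaFn
      simp [h]
  · rintro (h | h)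
    · left; intro x
      obtain ⟨u, w', b, rfl⟩ := decomp_snoc m s x
      have hu := h u
      unfold DeltaFn at hu
      set A := (Finset.univ.filter fun w' : Fin s → Bool =>
        f (Fin.snoc (Fin.append u w') false) = false ∧
        f (Fin.snoc (Fin.append u w') true) = false) with hA
      have hAle : A.card ≤ 2 ^ s := by
        calc A.card ≤ (Finset.univ : Finset (Fin s → Bool)).card :=
          Finset.card_filter_le _ _
        _ = 2 ^ s := card_pow s
      have h2 : ((2 ^ s : ℕ) : ℤ) = 2 ^ s := by push_cast; ring
      have hAcard : A.card = 2 ^ s := by omega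
      have hAuniv : A = Finset.univ := by
        apply Finset.eq_univ_of_card
        rw [hAcard]; simp
      have hmem : w' ∈ A := hAuniv ▸ Finset.mem_univ w'
      rw [hA, Finset.mem_filter] at hmem
      cases b
      · exact hmem.2.1
      · exact hmem.2.2
    · right; intro x
      obtain ⟨u, w', b, rfl⟩ := decomp_snoc m s x
      have hu := h u
      unfold DeltaFn at hu
      set B := (Finset.univ.filter fun w' : Fin s → Bool =>
        f (Fin.snoc (Fin.append u w') false) = true ∧
        f (Fin.snoc (Fin.append u w') true) = true) with hB
      have hBle : B.card ≤ 2 ^ s := by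
        calc B.card ≤ (Finset.univ : Finset (Fin s → Bool)).card :=
          Finset.card_filter_le _ _
        _ = 2 ^ s := card_pow s
      have h2 : ((2 ^ s : ℕ) : ℤ) = 2 ^ s := by push_cast; ring
      have hBcard : B.card = 2 ^ s := by omega
      have hBuniv : B = Finset.univ := by
        apply Finset.eq_univ_of_card
        rw [hBcard]; simp
      have hmem : w' ∈ B := hBuniv ▸ Finset.mem_univ w'
      rw [hB, Finset.mem_filter] at hmem
      cases b
      · exact hmem.2.1
      · exact hmem.2.2
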